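/- The values of the complex multiplicative integral of f* along a piecewise smooth path z : [a,b] → D are exactly exp(2πn(z(b)-z(a))i) · f(z(b))/f(z(a)) for n ∈ ℤ; in particular, each value I*_n satisfies I*_n = exp(2πn(z(b)-z(a))i) · I*_0. -/

import Mathlib

open Real

open Set in
/-- `g · exp(-∫ₐᵗ g'/g)` has derivative zero, hence is constant. -/
theorem exp_integral_deriv_div_eq_div {g g' : ℝ → ℂ} {a b : ℝ} (hab : a ≤ b)
    (hg : ContinuousOn g (Icc a b)) (hg' : ∀ t ∈ Ioo a b, HasDerivAt g (g' t) t)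
    (hg0 : ∀ t ∈ Icc a b, g t ≠ 0) (hc : ContinuousOn (fun t => g' t / g t) (Icc a b)) :
    Complex.exp (∫ t in a..b, g' t / g t) = g b / g a := by
  set I : ℝ → ℂ := fun u => ∫ t in a..u, g' t / g t
  have hI : ContinuousOn I (Icc a b) := by
    have h := intervalIntegral.continuousOn_primitive_interval (μ := MeasureTheory.volume)
      (f := fun t => g' t / g t) (a := a) (b := b)
    rw [uIcc_of_le hab] at h
    exact h hc.integrableOn_Icc
  have hI' : ∀ t ∈ Ioo a b, HasDerivAt I (g' t / g t) t := fun t ht =>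
    intervalIntegral.integral_hasDerivAt_right
      ((hc.mono (Icc_subset_Icc le_rfl ht.2.le)).intervalIntegrable_of_Icc ht.1.le)
      ((hc.mono Ioo_subset_Icc_self).stronglyMeasurableAtFilter isOpen_Ioo t ht)
      (hc.continuousAt (Icc_mem_nhds ht.1 ht.2))
  have hφ' : ∀ t ∈ Ioo a b, HasDerivAt (fun t => g t * Complex.exp (-I t)) 0 t := fun t ht =>
    ((hg' t ht).mul (hI' t ht).neg.cexp).congr_deriv (by
      field_simp [hg0 t (Ioo_subset_Icc_self ht)]
      ring)
  have hconst : g b * Complex.exp (-I b) = g a * Complex.exp (-I a) := by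
    simpa [sub_eq_zero] using (intervalIntegral.integral_eq_sub_of_hasDerivAt_of_le hab
      (hg.mul hI.neg.cexp) hφ' intervalIntegrable_const).symm
  rw [show I a = 0 from intervalIntegral.integral_same, neg_zero, Complex.exp_zero, mul_one] at hconst
  rw [eq_div_iff (hg0 a (left_mem_Icc.2 hab)), ← hconst, mul_left_comm, ← Complex.exp_add,
    add_neg_cancel, Complex.exp_zero, mul_one]

theorem complex_mult_integral_values_general (D : Set ℂ) (hD : IsOpen D)
    (f : ℂ → ℂ)
    (hf : ∀ w ∈ D, DifferentiableAt ℂ f w) (hf0 : ∀ w ∈ D, f w ≠ 0)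
    (z : ℝ → ℂ) (hz : ContDiff ℝ 1 z) (a b : ℝ) (hab : a ≤ b)
    (hmem : ∀ t ∈ Set.Icc a b, z t ∈ D) :
    ∀ n : ℤ,
      Complex.exp (2 * π * n * (z b - z a) * Complex.I) *
        Complex.exp (∫ t in a..b, (deriv f (z t) / f (z t)) * deriv z t)
      = Complex.exp (2 * π * n * (z b - z a) * Complex.I) * (f (z b) / f (z a)) := by
  intro n
  congr 1
  have hfD : DifferentiableOn ℂ f D := fun w hw => (hf w hw).differentiableWithinAt
  have hlogDeriv : ContinuousOn (fun w => deriv f w / f w) D :=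
    (hfD.analyticOnNhd hD).deriv.continuousOn.div hfD.continuousOn hf0
  have hderiv (t : ℝ) (ht : t ∈ Set.Icc a b) :
      HasDerivAt (fun t => f (z t)) (deriv f (z t) * deriv z t) t :=
    (hf _ (hmem t ht)).hasDerivAt.comp t (hz.differentiable one_ne_zero t).hasDerivAt
  have hcont : ContinuousOn (fun t => deriv f (z t) * deriv z t / f (z t)) (Set.Icc a b) := by
    simp_rw [mul_div_right_comm]
    exact (hlogDeriv.comp hz.continuous.continuousOn hmem).mul
      (hz.continuous_deriv le_rfl).continuousOn
  simp_rw [div_mul_eq_mul_div]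
  exact exp_integral_deriv_div_eq_div hab (fun t ht => (hderiv t ht).continuousAt.continuousWithinAt)
    (fun t ht => hderiv t (Set.Ioo_subset_Icc_self ht)) (fun t ht => hf0 _ (hmem t ht)) hcont

theorem complex_mult_integral_values (D : Set ℂ) (hD : IsOpen D)
    (hconn : IsConnected D) (f : ℂ → ℂ)
    (hf : ∀ w ∈ D, DifferentiableAt ℂ f w) (hf0 : ∀ w ∈ D, f w ≠ 0)
    (z : ℝ → ℂ) (hz : ContDiff ℝ 1 z) (a b : ℝ) (hab : a ≤ b)
    (hmem : ∀ t ∈ Set.Icc a b, z t ∈ D) :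
    ∀ n : ℤ,
      Complex.exp (2 * π * n * (z b - z a) * Complex.I) *
        Complex.exp (∫ t in a..b, (deriv f (z t) / f (z t)) * deriv z t)
      = Complex.exp (2 * π * n * (z b - z a) * Complex.I) * (f (z b) / f (z a)) :=
  complex_mult_integral_values_general D hD f hf hf0 z hz a b hab hmem
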